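/- arXiv:1610.09132 — 2 statements merged into one kernel-verified Lean document; each statement's English description precedes it below -/
import Mathlib

section
/- (Approximation-ratio inequality, eqs. (11)–(12)) Suppose Σ_{i=1}^n ‖s_i − t_i‖ > 0. Then for every capacity-c plan with carried cost V, the best candidate plan satisfies min_{0 ≤ j ≤ c−1} SOL_j ≤ ( 1 + √2·(c−1)·‖T‖ / Σ_{i=1}^n ‖s_i − t_i‖ ) · V. In particular, with OPT defined as the infimum of carried costs over all capacity-c plans, min_j SOL_j ≤ ( 1 + √2·(c−1)·‖T‖ / Σ_{i=1}^n ‖s_i − t_i‖ ) · OPT. -/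
open scoped BigOperators

noncomputable section

/-- `d`-dimensional Euclidean space `ℝ^d`. -/
abbrev Pt (d : ℕ) := EuclideanSpace ℝ (Fin d)

/-- The distance between the requests `r_i = (s_i, t_i)` and `r_j = (s_j, t_j)` viewed as
points of `ℝ^{2d}` with the Euclidean norm: `‖r_i − r_j‖ = √(‖s_i − s_j‖² + ‖t_i − t_j‖²)`. -/
def reqDist {d n : ℕ} (s t : ZMod n → Pt d) (i j : ZMod n) : ℝ :=
  Real.sqrt (‖s i - s j‖ ^ 2 + ‖t i - t j‖ ^ 2)

/-- The length `‖T‖` of the tour given by the permutation `σ` (indices cyclic mod `n`):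
`‖T‖ = Σ_{i} ‖r_{σ(i)} − r_{σ(i+1)}‖` in `ℝ^{2d}`. -/
def tourLength {d n : ℕ} (s t : ZMod n → Pt d) (σ : Equiv.Perm (ZMod n)) : ℝ :=
  ∑ i ∈ Finset.range n, reqDist s t (σ (i : ZMod n)) (σ ((i : ZMod n) + 1))

/-- The LIFO trip cost of the group of `c` consecutive requests starting at cyclic
position `a`: pick up `σ(a), σ(a+1), …, σ(a+c−1)` in tour order and deliver in reverse. -/
def lifoCost {d n : ℕ} (s t : ZMod n → Pt d) (σ : Equiv.Perm (ZMod n)) (c : ℕ)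
    (a : ZMod n) : ℝ :=
  (∑ i ∈ Finset.range (c - 1), ‖s (σ (a + (i : ZMod n))) - s (σ (a + (i : ZMod n) + 1))‖)
    + ‖s (σ (a + ((c - 1 : ℕ) : ZMod n))) - t (σ (a + ((c - 1 : ℕ) : ZMod n)))‖
    + ∑ i ∈ Finset.range (c - 1), ‖t (σ (a + (i : ZMod n) + 1)) - t (σ (a + (i : ZMod n)))‖

/-- For offset `j`, the `g`-th group of `c` consecutive requests starts at cyclic position
`j + 1 + g·c`. -/
def groupStart (n c j g : ℕ) : ZMod n := ((j + 1 + g * c : ℕ) : ZMod n)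

/-- The candidate cost `SOL_j`: the cyclic sequence `σ(j+1), …, σ(j+n)` is split into `m`
consecutive groups of `c` requests, and `SOL_j` is the sum of their LIFO trip costs. -/
def SOLcost {d n : ℕ} (s t : ZMod n → Pt d) (σ : Equiv.Perm (ZMod n)) (c m j : ℕ) : ℝ :=
  ∑ g ∈ Finset.range m, lifoCost s t σ c (groupStart n c j g)

/-- A (nonpreemptive) plan serving the `n` requests `(s_i, t_i)` with a single vehicle of
capacity `c`: a finite route `p_0, p_1, …, p_M` in `ℝ^d`, with pickup step `a i` and
delivery step `b i` for each request `i` (object `i` is on board during steps `k` with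
`a i ≤ k < b i`), such that the load never exceeds `c`. -/
structure Plan (d n c : ℕ) (s t : Fin n → Pt d) where
  M : ℕ
  p : ℕ → Pt d
  a : Fin n → ℕ
  b : Fin n → ℕ
  hab : ∀ i, a i < b i
  hbM : ∀ i, b i ≤ M
  hstart : ∀ i, p (a i) = s i
  hend : ∀ i, p (b i) = t i
  hcap : ∀ k : ℕ, (Finset.univ.filter fun i => a i ≤ k ∧ k < b i).card ≤ c

/-- The load (number of objects on board) of the plan at step `k`. -/
def Plan.load {d n c : ℕ} {s t : Fin n → Pt d} (P : Plan d n c s t) (k : ℕ) : ℕ :=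
  (Finset.univ.filter fun i => P.a i ≤ k ∧ k < P.b i).card

/-- The carried cost of a plan: the distance traveled while carrying at least one object. -/
def Plan.carriedCost {d n c : ℕ} {s t : Fin n → Pt d} (P : Plan d n c s t) : ℝ :=
  ∑ k ∈ Finset.range P.M, if 1 ≤ P.load k then ‖P.p (k + 1) - P.p k‖ else 0

/-- The total cost of a plan: the total distance traveled by the vehicle. -/
def Plan.totalCost {d n c : ℕ} {s t : Fin n → Pt d} (P : Plan d n c s t) : ℝ :=
  ∑ k ∈ Finset.range P.M, ‖P.p (k + 1) - P.p k‖

lemma aux_sum_grid {β : Type*} [AddCommMonoid β] (f : ℕ → β) (m c : ℕ) :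
    ∑ g ∈ Finset.range m, ∑ j ∈ Finset.range c, f (j + g * c)
      = ∑ k ∈ Finset.range (m * c), f k := by
  induction m with
  | zero => simp
  | succ m ih =>
      rw [Finset.sum_range_succ, ih, Nat.succ_mul, Finset.sum_range_add]
      congr 1
      exact Finset.sum_congr rfl fun j _ => by rw [Nat.add_comm]

lemma aux_sum_range_zmod {n : ℕ} [NeZero n] {β : Type*} [AddCommMonoid β]
    (f : ZMod n → β) :
    ∑ k ∈ Finset.range n, f (k : ZMod n) = ∑ x : ZMod n, f x := by
  refine Finset.sum_nbij' (fun k => (k : ZMod n)) (fun x => x.val) ?_ ?_ ?_ ?_ ?_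
  · intro a _; exact Finset.mem_univ _
  · intro x _; exact Finset.mem_range.mpr x.val_lt
  · intro a ha; exact ZMod.val_natCast_of_lt (Finset.mem_range.mp ha)
  · intro x _; exact ZMod.natCast_zmod_val x
  · intro a _; rfl

lemma aux_sum_shift {n : ℕ} [NeZero n] (f : ZMod n → ℝ) (b : ℕ) :
    ∑ k ∈ Finset.range n, f ((k + b : ℕ) : ZMod n)
      = ∑ k ∈ Finset.range n, f (k : ZMod n) := by
  have h1 : ∀ k : ℕ, ((k + b : ℕ) : ZMod n) = (k : ZMod n) + (b : ZMod n) := by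
    intro k; push_cast; ring
  simp_rw [h1]
  rw [show (∑ k ∈ Finset.range n, f ((k : ZMod n) + (b : ZMod n)))
      = ∑ x : ZMod n, f (x + (b : ZMod n)) from aux_sum_range_zmod (fun x => f (x + (b : ZMod n))),
    aux_sum_range_zmod (fun x => f x)]
  exact Fintype.sum_equiv (Equiv.addRight (b : ZMod n)) _ _ (fun x => rfl)

lemma aux_two_norm_le {d n : ℕ} (s t : ZMod n → Pt d) (u v : ZMod n) :
    ‖s u - s v‖ + ‖t u - t v‖ ≤ Real.sqrt 2 * reqDist s t u v := by
  unfold reqDist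
  rw [← Real.sqrt_mul (by norm_num : (0:ℝ) ≤ 2)]
  have h1 : (0:ℝ) ≤ ‖s u - s v‖ + ‖t u - t v‖ := by positivity
  rw [← Real.sqrt_sq h1]
  apply Real.sqrt_le_sqrt
  nlinarith [norm_nonneg (s u - s v), norm_nonneg (t u - t v),
    sq_nonneg (‖s u - s v‖ - ‖t u - t v‖)]

lemma aux_path_bound {d : ℕ} (p : ℕ → Pt d) : ∀ u v : ℕ, u ≤ v →
    ‖p u - p v‖ ≤ ∑ k ∈ Finset.Ico u v, ‖p (k + 1) - p k‖ := by
  intro u v huv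
  induction v, huv using Nat.le_induction with
  | base => simp
  | succ v hv ih =>
      rw [Finset.sum_Ico_succ_top hv]
      have htri : ‖p u - p (v+1)‖ ≤ ‖p u - p v‖ + ‖p v - p (v+1)‖ := by
        have := dist_triangle (p u) (p v) (p (v+1))
        simpa [dist_eq_norm] using this
      rw [norm_sub_rev (p v)] at htri
      linarith

lemma aux_carriedCost_nonneg {d n c : ℕ} {s t : Fin n → Pt d} (P : Plan d n c s t) :
    0 ≤ P.carriedCost := by
  apply Finset.sum_nonneg
  intro k _
  split
  · positivity
  · exact le_rfl

lemma aux_carried_bound {d n c : ℕ} {s t : Fin n → Pt d} (P : Plan d n c s t) :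
    ∑ i : Fin n, ‖s i - t i‖ ≤ (c : ℝ) * P.carriedCost := by
  have h1 : ∀ i : Fin n, ‖s i - t i‖
      ≤ ∑ k ∈ Finset.Ico (P.a i) (P.b i), ‖P.p (k + 1) - P.p k‖ := by
    intro i
    rw [← P.hstart i, ← P.hend i]
    exact aux_path_bound P.p _ _ (P.hab i).le
  have h2 : ∀ i : Fin n, Finset.Ico (P.a i) (P.b i)
      = (Finset.range P.M).filter (fun k => P.a i ≤ k ∧ k < P.b i) := by
    intro i
    ext k
    simp only [Finset.mem_Ico, Finset.mem_filter, Finset.mem_range]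
    have := P.hbM i
    omega
  calc ∑ i : Fin n, ‖s i - t i‖
      ≤ ∑ i : Fin n, ∑ k ∈ Finset.Ico (P.a i) (P.b i), ‖P.p (k + 1) - P.p k‖ :=
        Finset.sum_le_sum fun i _ => h1 i
    _ = ∑ i : Fin n, ∑ k ∈ Finset.range P.M,
          if P.a i ≤ k ∧ k < P.b i then ‖P.p (k + 1) - P.p k‖ else 0 := by
        refine Finset.sum_congr rfl fun i _ => ?_
        rw [h2 i, Finset.sum_filter]
    _ = ∑ k ∈ Finset.range P.M, ∑ i : Fin n,
          if P.a i ≤ k ∧ k < P.b i then ‖P.p (k + 1) - P.p k‖ else 0 :=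
        Finset.sum_comm
    _ = ∑ k ∈ Finset.range P.M, (P.load k : ℝ) * ‖P.p (k + 1) - P.p k‖ := by
        refine Finset.sum_congr rfl fun k _ => ?_
        rw [← Finset.sum_filter, Finset.sum_const, Plan.load, nsmul_eq_mul]
    _ ≤ ∑ k ∈ Finset.range P.M,
          (c : ℝ) * (if 1 ≤ P.load k then ‖P.p (k + 1) - P.p k‖ else 0) := by
        refine Finset.sum_le_sum fun k _ => ?_
        by_cases hk : 1 ≤ P.load k
        · rw [if_pos hk]
          have hle : P.load k ≤ c := P.hcap k
          have : (P.load k : ℝ) ≤ (c : ℝ) := by exact_mod_cast hle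
          exact mul_le_mul_of_nonneg_right this (norm_nonneg _)
        · rw [if_neg hk]
          have : P.load k = 0 := by omega
          simp [this]
    _ = (c : ℝ) * P.carriedCost := by rw [Plan.carriedCost, Finset.mul_sum]

def trivPlan {d : ℕ} (n c : ℕ) (hc : 0 < c) (s t : Fin n → Pt d) : Plan d n c s t where
  M := 2 * n
  p := fun k => if h : k / 2 < n then (if k % 2 = 0 then s ⟨k / 2, h⟩ else t ⟨k / 2, h⟩) else 0
  a := fun i => 2 * i
  b := fun i => 2 * i + 1
  hab := fun i => by show 2*(i:ℕ) < 2*(i:ℕ)+1; omega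
  hbM := fun i => by have := i.isLt; show 2*(i:ℕ)+1 ≤ 2*n; omega
  hstart := fun i => by
    have h : (2 * (i : ℕ)) / 2 = (i : ℕ) := by omega
    have h2 : (2 * (i : ℕ)) % 2 = 0 := by omega
    simp [h, h2, i.isLt]
  hend := fun i => by
    have h : (2 * (i : ℕ) + 1) / 2 = (i : ℕ) := by omega
    have h2 : (2 * (i : ℕ) + 1) % 2 = 1 := by omega
    simp [h, h2, i.isLt]
  hcap := fun k => by
    refine le_trans (Finset.card_le_one.mpr ?_) hc
    intro i hi j hj
    simp only [Finset.mem_filter] at hi hj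
    have hi' : 2*(i:ℕ) ≤ k ∧ k < 2*(i:ℕ)+1 := hi.2
    have hj' : 2*(j:ℕ) ≤ k ∧ k < 2*(j:ℕ)+1 := hj.2
    exact Fin.ext (by omega)

lemma aux_sol_sum_bound {d c m n : ℕ} (hc : 0 < c) (hm : 1 ≤ m) (hn : n = m * c)
    (s t : ZMod n → Pt d) (σ : Equiv.Perm (ZMod n)) :
    ∑ j ∈ Finset.range c, SOLcost s t σ c m j
      ≤ Real.sqrt 2 * ((c : ℝ) - 1) * tourLength s t σ
        + ∑ i ∈ Finset.range n, ‖s (i : ZMod n) - t (i : ZMod n)‖ := by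
  have hn0 : 0 < n := by rw [hn]; exact Nat.mul_pos hm hc
  haveI : NeZero n := ⟨hn0.ne'⟩
  set e : ℕ → ℝ := fun k => reqDist s t (σ (k : ZMod n)) (σ ((k : ZMod n) + 1)) with he
  set h : ℕ → ℝ := fun k => ‖s (σ (k : ZMod n)) - t (σ (k : ZMod n))‖ with hh
  have hcast : ∀ u i : ℕ, ((u : ℕ) : ZMod n) + (i : ZMod n) = ((u + i : ℕ) : ZMod n) := by
    intro u i; push_cast; ring
  -- per-group bound
  have key : ∀ j g : ℕ, lifoCost s t σ c (groupStart n c j g)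
      ≤ Real.sqrt 2 * ∑ i ∈ Finset.range (c - 1), e (j + 1 + g * c + i)
        + h (j + 1 + g * c + (c - 1)) := by
    intro j g
    unfold lifoCost groupStart
    have hmid : ‖s (σ (((j + 1 + g * c : ℕ) : ZMod n) + ((c - 1 : ℕ) : ZMod n)))
          - t (σ (((j + 1 + g * c : ℕ) : ZMod n) + ((c - 1 : ℕ) : ZMod n)))‖
        = h (j + 1 + g * c + (c - 1)) := by
      rw [hcast]
    have hAB : (∑ i ∈ Finset.range (c - 1),
          ‖s (σ (((j + 1 + g * c : ℕ) : ZMod n) + (i : ZMod n)))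
            - s (σ (((j + 1 + g * c : ℕ) : ZMod n) + (i : ZMod n) + 1))‖)
        + ∑ i ∈ Finset.range (c - 1),
          ‖t (σ (((j + 1 + g * c : ℕ) : ZMod n) + (i : ZMod n) + 1))
            - t (σ (((j + 1 + g * c : ℕ) : ZMod n) + (i : ZMod n)))‖
        ≤ Real.sqrt 2 * ∑ i ∈ Finset.range (c - 1), e (j + 1 + g * c + i) := by
      rw [← Finset.sum_add_distrib, Finset.mul_sum]
      refine Finset.sum_le_sum fun i _ => ?_
      rw [hcast, norm_sub_rev (t _)]
      exact aux_two_norm_le s t _ _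
    rw [hmid]
    linarith
  calc ∑ j ∈ Finset.range c, SOLcost s t σ c m j
      ≤ ∑ j ∈ Finset.range c, ∑ g ∈ Finset.range m,
          (Real.sqrt 2 * ∑ i ∈ Finset.range (c - 1), e (j + 1 + g * c + i)
            + h (j + 1 + g * c + (c - 1))) := by
        refine Finset.sum_le_sum fun j _ => ?_
        exact Finset.sum_le_sum fun g _ => key j g
    _ = Real.sqrt 2 * (∑ j ∈ Finset.range c, ∑ g ∈ Finset.range m,
            ∑ i ∈ Finset.range (c - 1), e (j + 1 + g * c + i))
          + ∑ j ∈ Finset.range c, ∑ g ∈ Finset.range m, h (j + 1 + g * c + (c - 1)) := by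
        simp_rw [Finset.sum_add_distrib, Finset.mul_sum]
    _ = Real.sqrt 2 * (((c - 1 : ℕ) : ℝ) * tourLength s t σ)
          + ∑ i ∈ Finset.range n, ‖s (i : ZMod n) - t (i : ZMod n)‖ := by
        congr 1
        · congr 1
          rw [Finset.sum_comm]
          rw [show (∑ g ∈ Finset.range m, ∑ j ∈ Finset.range c,
              ∑ i ∈ Finset.range (c - 1), e (j + 1 + g * c + i))
            = ∑ i ∈ Finset.range (c - 1), ∑ g ∈ Finset.range m,
              ∑ j ∈ Finset.range c, e (j + 1 + g * c + i) from by
              rw [show (∑ g ∈ Finset.range m, ∑ j ∈ Finset.range c,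
                  ∑ i ∈ Finset.range (c - 1), e (j + 1 + g * c + i))
                = ∑ g ∈ Finset.range m, ∑ i ∈ Finset.range (c - 1),
                  ∑ j ∈ Finset.range c, e (j + 1 + g * c + i) from
                Finset.sum_congr rfl fun g _ => Finset.sum_comm]
              exact Finset.sum_comm]
          have hfix : ∀ i ∈ Finset.range (c - 1),
              (∑ g ∈ Finset.range m, ∑ j ∈ Finset.range c, e (j + 1 + g * c + i))
                = tourLength s t σ := by
            intro i _
            have h1 : ∀ g j : ℕ, e (j + 1 + g * c + i) = e ((j + g * c) + (1 + i)) := by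
              intro g j; congr 1; omega
            simp_rw [h1]
            rw [aux_sum_grid (fun k => e (k + (1 + i))) m c, ← hn]
            exact aux_sum_shift (fun x : ZMod n =>
              reqDist s t (σ x) (σ (x + 1))) (1 + i)
          rw [Finset.sum_congr rfl hfix, Finset.sum_const, Finset.card_range,
            nsmul_eq_mul]
        · rw [Finset.sum_comm]
          have h1 : ∀ g j : ℕ, h (j + 1 + g * c + (c - 1)) = h ((j + g * c) + c) := by
            intro g j; congr 1; omega
          simp_rw [h1]
          rw [aux_sum_grid (fun k => h (k + c)) m c, ← hn]
          rw [aux_sum_shift (fun x : ZMod n => ‖s (σ x) - t (σ x)‖) c]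
          rw [aux_sum_range_zmod (fun x : ZMod n => ‖s (σ x) - t (σ x)‖),
            Equiv.sum_comp σ (fun x => ‖s x - t x‖),
            ← aux_sum_range_zmod (fun x : ZMod n => ‖s x - t x‖)]
    _ = Real.sqrt 2 * ((c : ℝ) - 1) * tourLength s t σ
          + ∑ i ∈ Finset.range n, ‖s (i : ZMod n) - t (i : ZMod n)‖ := by
        rw [Nat.cast_sub hc, Nat.cast_one]
        ring

/-- approximation-ratio inequality, eqs. (11)–(12): if
`Σ_i ‖s_i − t_i‖ > 0`, then for every capacity-`c` plan with carried cost `V`,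
`min_{0 ≤ j ≤ c−1} SOL_j ≤ (1 + √2·(c−1)·‖T‖ / Σ_i ‖s_i − t_i‖) · V`; in particular,
with `OPT` the infimum of carried costs over all capacity-`c` plans,
`min_j SOL_j ≤ (1 + √2·(c−1)·‖T‖ / Σ_i ‖s_i − t_i‖) · OPT`. -/
theorem stmt_6 (d c m : ℕ) (hd : 1 ≤ d) (hc : 0 < c) (hm : 1 ≤ m) (n : ℕ) (hn : n = m * c)
    (s t : ZMod n → Pt d) (σ : Equiv.Perm (ZMod n))
    (hpos : 0 < ∑ i ∈ Finset.range n, ‖s (i : ZMod n) - t (i : ZMod n)‖) :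
    (∀ P : Plan d n c (fun i : Fin n => s ((i : ℕ) : ZMod n))
        (fun i : Fin n => t ((i : ℕ) : ZMod n)),
        (Finset.range c).inf' (Finset.nonempty_range_iff.mpr hc.ne')
            (fun j => SOLcost s t σ c m j)
          ≤ (1 + Real.sqrt 2 * ((c : ℝ) - 1) * tourLength s t σ
                / ∑ i ∈ Finset.range n, ‖s (i : ZMod n) - t (i : ZMod n)‖)
              * P.carriedCost)
    ∧ (Finset.range c).inf' (Finset.nonempty_range_iff.mpr hc.ne')
          (fun j => SOLcost s t σ c m j)
        ≤ (1 + Real.sqrt 2 * ((c : ℝ) - 1) * tourLength s t σ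
              / ∑ i ∈ Finset.range n, ‖s (i : ZMod n) - t (i : ZMod n)‖)
            * sInf {x : ℝ | ∃ P : Plan d n c (fun i : Fin n => s ((i : ℕ) : ZMod n))
                (fun i : Fin n => t ((i : ℕ) : ZMod n)), P.carriedCost = x} := by
  have hn0 : 0 < n := by rw [hn]; exact Nat.mul_pos hm hc
  set D := ∑ i ∈ Finset.range n, ‖s (i : ZMod n) - t (i : ZMod n)‖ with hD
  set A := Real.sqrt 2 * ((c : ℝ) - 1) * tourLength s t σ with hA
  set I := (Finset.range c).inf' (Finset.nonempty_range_iff.mpr hc.ne')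
      (fun j => SOLcost s t σ c m j) with hI
  have hc1 : (1 : ℝ) ≤ (c : ℝ) := by exact_mod_cast hc
  have hcR : (0 : ℝ) < (c : ℝ) := by linarith
  have hT : 0 ≤ tourLength s t σ := Finset.sum_nonneg fun i _ => Real.sqrt_nonneg _
  have hAnn : 0 ≤ A := by
    have h2 : 0 ≤ Real.sqrt 2 := Real.sqrt_nonneg 2
    have h3 : 0 ≤ (c : ℝ) - 1 := by linarith
    rw [hA]; exact mul_nonneg (mul_nonneg h2 h3) hT
  have hKpos : (0 : ℝ) < 1 + A / D := by
    have := div_nonneg hAnn hpos.le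
    linarith
  have main : ∀ P : Plan d n c (fun i : Fin n => s ((i : ℕ) : ZMod n))
      (fun i : Fin n => t ((i : ℕ) : ZMod n)),
      I ≤ (1 + A / D) * P.carriedCost := by
    intro P
    have hDV : D ≤ (c : ℝ) * P.carriedCost := by
      rw [hD, ← Fin.sum_univ_eq_sum_range
        (fun i : ℕ => ‖s (i : ZMod n) - t (i : ZMod n)‖) n]
      exact aux_carried_bound P
    have hIinf : (c : ℝ) * I ≤ ∑ j ∈ Finset.range c, SOLcost s t σ c m j := by
      have h1 : ∀ j ∈ Finset.range c, I ≤ SOLcost s t σ c m j := fun j hj =>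
        Finset.inf'_le _ hj
      calc (c : ℝ) * I = ∑ _j ∈ Finset.range c, I := by
            rw [Finset.sum_const, Finset.card_range, nsmul_eq_mul]
        _ ≤ _ := Finset.sum_le_sum h1
    have hAD : (c : ℝ) * I ≤ A + D :=
      le_trans hIinf (aux_sol_sum_bound hc hm hn s t σ)
    have h2 : A ≤ (A / D) * ((c : ℝ) * P.carriedCost) := by
      calc A = (A / D) * D := (div_mul_cancel₀ A hpos.ne').symm
        _ ≤ _ := mul_le_mul_of_nonneg_left hDV (div_nonneg hAnn hpos.le)
    have h4 : (c : ℝ) * I ≤ (c : ℝ) * ((1 + A / D) * P.carriedCost) := by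
      nlinarith [h2, hDV, hAD]
    exact le_of_mul_le_mul_left h4 hcR
  refine ⟨main, ?_⟩
  set S := {x : ℝ | ∃ P : Plan d n c (fun i : Fin n => s ((i : ℕ) : ZMod n))
      (fun i : Fin n => t ((i : ℕ) : ZMod n)), P.carriedCost = x} with hS
  have hSne : S.Nonempty := ⟨_, ⟨trivPlan n c hc _ _, rfl⟩⟩
  have h5 : I / (1 + A / D) ≤ sInf S := by
    refine le_csInf hSne ?_
    rintro x ⟨P, rfl⟩
    rw [div_le_iff₀ hKpos]
    rw [mul_comm]
    exact main P
  rw [div_le_iff₀ hKpos] at h5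
  linarith [h5]
end
end

section
/- (Theorem 1, deterministic core) Let d ≥ 1 and let (s_i, t_i)_{i≥1} be a sequence of requests in ℝ^d × ℝ^d with (1/n)·Σ_{i=1}^n ‖s_i − t_i‖ → μ for some μ > 0. For each n, let c_n ≥ 1 be an integer dividing n with c_n / n^{1/(2d)} → 0, let σ_n be a permutation of {1,…,n} whose tour length satisfies ‖T_n‖ ≤ K·n^{(2d−1)/(2d)} for a constant K, let SOL_n = min_{0 ≤ j ≤ c_n−1} SOL_j^{(n)} be the best candidate cost, and let OPT_n be the infimum of carried costs over all capacity-c_n plans for the first n requests. Then lim_{n→∞} SOL_n / OPT_n = 1. -/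
open scoped BigOperators

noncomputable section

open Filter
lemma sum_divmod (f : ℕ → ℝ) (a b : ℕ) :
    ∑ k ∈ Finset.range (a * b), f k
      = ∑ g ∈ Finset.range a, ∑ r ∈ Finset.range b, f (b * g + r) := by
  induction a with
  | zero => simp
  | succ a ih =>
      rw [Nat.succ_mul, Finset.sum_range_add, ih, Finset.sum_range_succ]
      congr 1
      apply Finset.sum_congr rfl
      intro r _
      ring_nf


lemma sum_zmod' {n : ℕ} [NeZero n] (f : ZMod n → ℝ) :
    ∑ i ∈ Finset.range n, f (i : ZMod n) = ∑ x : ZMod n, f x := by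
  refine Finset.sum_nbij' (fun k => (k : ZMod n)) (fun x => x.val) ?_ ?_ ?_ ?_ ?_
  · intro a _; exact Finset.mem_univ _
  · intro a _; exact Finset.mem_range.mpr (ZMod.val_lt a)
  · intro a ha; exact ZMod.val_cast_of_lt (Finset.mem_range.mp ha)
  · intro a _; exact ZMod.natCast_rightInverse a
  · intro a _; rfl

lemma sum_product_divmod (c m : ℕ) (hc : 0 < c) (f : ℕ → ℝ) :
    ∑ j ∈ Finset.range c, ∑ g ∈ Finset.range m, f (j + g * c)
      = ∑ k ∈ Finset.range (m * c), f k := by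
  rw [← Finset.sum_product']
  refine Finset.sum_nbij' (fun p => p.1 + p.2 * c) (fun k => (k % c, k / c)) ?_ ?_ ?_ ?_ ?_
  · rintro ⟨j, g⟩ hp
    simp only [Finset.mem_product, Finset.mem_range] at hp
    simp only [Finset.mem_range]
    have h1 : g + 1 ≤ m := hp.2
    have h2 : (g + 1) * c ≤ m * c := Nat.mul_le_mul_right c h1
    have : j + g * c < (g + 1) * c := by rw [add_one_mul]; omega
    omega
  · intro k hk
    simp only [Finset.mem_range] at hk
    simp only [Finset.mem_product, Finset.mem_range]
    exact ⟨Nat.mod_lt _ hc, Nat.div_lt_of_lt_mul (by rwa [mul_comm])⟩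
  · rintro ⟨j, g⟩ hp
    simp only [Finset.mem_product, Finset.mem_range] at hp
    have h1 : (j + g * c) % c = j := by rw [Nat.add_mul_mod_self_right, Nat.mod_eq_of_lt hp.1]
    have h2 : (j + g * c) / c = g := by
      rw [Nat.add_mul_div_right _ _ hc, Nat.div_eq_of_lt hp.1, zero_add]
    simp [h1, h2]
  · intro k _
    simp [Nat.mod_add_div']
  · intro a _; rfl

lemma sum_sum_le_zmod {n : ℕ} [NeZero n] (F : ZMod n → ℝ) (hF : ∀ x, 0 ≤ F x)
    (m c e : ℕ) (hc : 0 < c) (he : e ≤ c) (hn : m * c ≤ n) (z : ZMod n) :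
    ∑ g ∈ Finset.range m, ∑ i ∈ Finset.range e, F (z + ((g * c + i : ℕ) : ZMod n))
      ≤ ∑ x : ZMod n, F x := by
  rw [← Finset.sum_product']
  set φ : ℕ × ℕ → ZMod n := fun p => z + ((p.1 * c + p.2 : ℕ) : ZMod n) with hφ
  have hlt : ∀ p ∈ Finset.range m ×ˢ Finset.range e, p.1 * c + p.2 < n := by
    rintro ⟨g, i⟩ hp
    simp only [Finset.mem_product, Finset.mem_range] at hp
    show g * c + i < n
    have h2 : (g + 1) * c ≤ m * c := Nat.mul_le_mul_right c hp.1
    have : g * c + i < (g + 1) * c := by rw [add_one_mul]; omega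
    omega
  have hinj : ∀ p ∈ Finset.range m ×ˢ Finset.range e,
      ∀ q ∈ Finset.range m ×ˢ Finset.range e, φ p = φ q → p = q := by
    rintro ⟨g, i⟩ hp ⟨g', i'⟩ hq h
    have h' : ((g * c + i : ℕ) : ZMod n) = ((g' * c + i' : ℕ) : ZMod n) := by
      exact add_left_cancel h
    have hv : g * c + i = g' * c + i' := by
      have := congrArg ZMod.val h'
      rwa [ZMod.val_cast_of_lt (hlt _ hp), ZMod.val_cast_of_lt (hlt _ hq)] at this
    simp only [Finset.mem_product, Finset.mem_range] at hp hq
    have e1 : (g * c + i) / c = g := by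
      rw [mul_comm, Nat.mul_add_div hc, Nat.div_eq_of_lt (lt_of_lt_of_le hp.2 he), add_zero]
    have e1' : (g' * c + i') / c = g' := by
      rw [mul_comm, Nat.mul_add_div hc, Nat.div_eq_of_lt (lt_of_lt_of_le hq.2 he), add_zero]
    have e2 : (g * c + i) % c = i := by
      rw [mul_comm, Nat.mul_add_mod, Nat.mod_eq_of_lt (lt_of_lt_of_le hp.2 he)]
    have e2' : (g' * c + i') % c = i' := by
      rw [mul_comm, Nat.mul_add_mod, Nat.mod_eq_of_lt (lt_of_lt_of_le hq.2 he)]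
    have : g = g' := by rw [← e1, ← e1', hv]
    have : i = i' := by rw [← e2, ← e2', hv]
    simp_all
  calc ∑ p ∈ Finset.range m ×ˢ Finset.range e, F (φ p)
      = ∑ x ∈ (Finset.range m ×ˢ Finset.range e).image φ, F x :=
        (Finset.sum_image hinj).symm
    _ ≤ ∑ x : ZMod n, F x :=
        Finset.sum_le_sum_of_subset_of_nonneg (Finset.subset_univ _) fun x _ _ => hF x
lemma plan_lb {d n c : ℕ} {s t : Fin n → Pt d} (hc : 0 < c) (P : Plan d n c s t) :
    (∑ i : Fin n, ‖s i - t i‖) / c ≤ P.carriedCost := by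
  rw [div_le_iff₀ (by positivity)]
  have key : ∀ i : Fin n, ‖s i - t i‖ ≤
      ∑ k ∈ Finset.Ico (P.a i) (P.b i), ‖P.p (k+1) - P.p k‖ := by
    intro i
    have h := dist_le_range_sum_dist (fun m => P.p (P.a i + m)) (P.b i - P.a i)
    simp only [dist_eq_norm] at h
    have hab := (P.hab i).le
    rw [Nat.add_sub_cancel' hab] at h
    simp only [add_zero] at h
    rw [P.hstart, P.hend, norm_sub_rev] at h
    rw [norm_sub_rev]
    refine h.trans (le_of_eq ?_)
    rw [Finset.sum_Ico_eq_sum_range]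
    apply Finset.sum_congr rfl
    intro m _
    rw [norm_sub_rev]
    congr 2 <;> omega
  have hIco : ∀ i : Fin n, Finset.Ico (P.a i) (P.b i)
      = (Finset.range P.M).filter (fun k => P.a i ≤ k ∧ k < P.b i) := by
    intro i
    have := P.hbM i
    ext k; simp only [Finset.mem_Ico, Finset.mem_filter, Finset.mem_range]
    omega
  calc ∑ i : Fin n, ‖s i - t i‖
      ≤ ∑ i : Fin n, ∑ k ∈ Finset.Ico (P.a i) (P.b i), ‖P.p (k+1) - P.p k‖ :=
        Finset.sum_le_sum fun i _ => key i
    _ = ∑ k ∈ Finset.range P.M, (P.load k : ℝ) * ‖P.p (k+1) - P.p k‖ := by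
        simp only [hIco, Finset.sum_filter]
        rw [Finset.sum_comm]
        apply Finset.sum_congr rfl
        intro k _
        rw [Plan.load, Finset.card_filter]
        push_cast
        rw [Finset.sum_mul]
        refine Finset.sum_congr rfl fun i _ => ?_
        split <;> simp
    _ ≤ ∑ k ∈ Finset.range P.M,
          (if 1 ≤ P.load k then ‖P.p (k+1) - P.p k‖ else 0) * c := by
        apply Finset.sum_le_sum
        intro k _
        by_cases h : 1 ≤ P.load k
        · simp only [h, if_true]
          have h2 : (P.load k : ℝ) ≤ c := by exact_mod_cast P.hcap k
          nlinarith [norm_nonneg (P.p (k+1) - P.p k)]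
        · simp only [h, if_false, zero_mul]
          have : P.load k = 0 := by omega
          simp [this]
    _ = P.carriedCost * c := by rw [Plan.carriedCost, Finset.sum_mul]
lemma hcross_lemma {d n : ℕ} [NeZero n] (s t : ZMod n → Pt d) (σ : Equiv.Perm (ZMod n))
    (c m : ℕ) (hc : 0 < c) (hm : m * c = n) :
    ∑ j ∈ Finset.range c, ∑ g ∈ Finset.range m,
      ‖s (σ (groupStart n c j g + ((c - 1 : ℕ) : ZMod n)))
        - t (σ (groupStart n c j g + ((c - 1 : ℕ) : ZMod n)))‖
      = ∑ x : ZMod n, ‖s x - t x‖ := by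
  have haddr2 : ∀ j g : ℕ, groupStart n c j g + ((c - 1 : ℕ) : ZMod n)
      = (((j + g * c) + c : ℕ) : ZMod n) := by
    intro j g; rw [groupStart, ← Nat.cast_add]; congr 1; omega
  have step1 : ∑ j ∈ Finset.range c, ∑ g ∈ Finset.range m,
      ‖s (σ (groupStart n c j g + ((c - 1 : ℕ) : ZMod n)))
        - t (σ (groupStart n c j g + ((c - 1 : ℕ) : ZMod n)))‖
      = ∑ k ∈ Finset.range (m * c),
          ‖s (σ ((k + c : ℕ) : ZMod n)) - t (σ ((k + c : ℕ) : ZMod n))‖ := by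
    rw [← sum_product_divmod c m hc
      (fun k : ℕ => ‖s (σ ((k + c : ℕ) : ZMod n)) - t (σ ((k + c : ℕ) : ZMod n))‖)]
    exact Finset.sum_congr rfl fun j _ => Finset.sum_congr rfl fun g _ => by rw [haddr2]
  rw [step1, hm]
  calc ∑ k ∈ Finset.range n, ‖s (σ ((k + c : ℕ) : ZMod n)) - t (σ ((k + c : ℕ) : ZMod n))‖
      = ∑ k ∈ Finset.range n,
          (fun x : ZMod n => ‖s (σ (x + (c : ZMod n))) - t (σ (x + (c : ZMod n)))‖)
            ((k : ℕ) : ZMod n) :=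
        Finset.sum_congr rfl fun k _ => by push_cast; rfl
    _ = ∑ x : ZMod n, ‖s (σ (x + (c : ZMod n))) - t (σ (x + (c : ZMod n)))‖ := sum_zmod' (fun x : ZMod n => ‖s (σ (x + (c : ZMod n))) - t (σ (x + (c : ZMod n)))‖)
    _ = ∑ x : ZMod n, ‖s (σ x) - t (σ x)‖ :=
        Equiv.sum_comp (Equiv.addRight ((c : ℕ) : ZMod n)) (fun x => ‖s (σ x) - t (σ x)‖)
    _ = ∑ x : ZMod n, ‖s x - t x‖ := Equiv.sum_comp σ (fun x => ‖s x - t x‖)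
lemma norm_s_le {d n : ℕ} (s t : ZMod n → Pt d) (i j : ZMod n) :
    ‖s i - s j‖ ≤ reqDist s t i j := by
  rw [reqDist]
  conv_lhs => rw [← Real.sqrt_sq (norm_nonneg (s i - s j))]
  exact Real.sqrt_le_sqrt (le_add_of_nonneg_right (sq_nonneg _))

lemma norm_t_le {d n : ℕ} (s t : ZMod n → Pt d) (i j : ZMod n) :
    ‖t i - t j‖ ≤ reqDist s t i j := by
  rw [reqDist]
  conv_lhs => rw [← Real.sqrt_sq (norm_nonneg (t i - t j))]
  exact Real.sqrt_le_sqrt (le_add_of_nonneg_left (sq_nonneg _))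

lemma tourLength_eq {d n : ℕ} [NeZero n] (s t : ZMod n → Pt d) (σ : Equiv.Perm (ZMod n)) :
    tourLength s t σ = ∑ x : ZMod n, reqDist s t (σ x) (σ (x + 1)) := by
  rw [tourLength]
  exact sum_zmod' (fun x => reqDist s t (σ x) (σ (x + 1)))

lemma sol_avg {d n : ℕ} [NeZero n] (s t : ZMod n → Pt d) (σ : Equiv.Perm (ZMod n))
    (c m : ℕ) (hc : 0 < c) (hm : m * c = n) :
    ∑ j ∈ Finset.range c, SOLcost s t σ c m j
      ≤ (∑ x : ZMod n, ‖s x - t x‖) + 2 * c * tourLength s t σ := by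
  have hFnn : ∀ x : ZMod n, 0 ≤ reqDist s t (σ x) (σ (x + 1)) := fun x => Real.sqrt_nonneg _
  have hsn : m * c ≤ n := le_of_eq hm
  have haddr : ∀ j g i : ℕ, groupStart n c j g + (i : ZMod n)
      = ((j + 1 : ℕ) : ZMod n) + ((g * c + i : ℕ) : ZMod n) := by
    intro j g i; rw [groupStart]; push_cast; ring
  have key : ∀ j : ℕ, SOLcost s t σ c m j ≤
      (∑ g ∈ Finset.range m, ‖s (σ (groupStart n c j g + ((c - 1 : ℕ) : ZMod n)))
        - t (σ (groupStart n c j g + ((c - 1 : ℕ) : ZMod n)))‖) + 2 * tourLength s t σ := by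
    intro j
    rw [SOLcost]
    simp only [lifoCost]
    rw [Finset.sum_add_distrib, Finset.sum_add_distrib]
    have hA : ∑ g ∈ Finset.range m, ∑ i ∈ Finset.range (c - 1),
        ‖s (σ (groupStart n c j g + (i : ZMod n))) - s (σ (groupStart n c j g + (i : ZMod n) + 1))‖
        ≤ tourLength s t σ := by
      rw [tourLength_eq]
      refine le_trans (Finset.sum_le_sum fun g _ => Finset.sum_le_sum fun i _ => ?_)
        (sum_sum_le_zmod _ hFnn m c (c - 1) hc (Nat.sub_le _ _) hsn ((j + 1 : ℕ) : ZMod n))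
      rw [haddr]
      exact norm_s_le s t _ _
    have hC : ∑ g ∈ Finset.range m, ∑ i ∈ Finset.range (c - 1),
        ‖t (σ (groupStart n c j g + (i : ZMod n) + 1)) - t (σ (groupStart n c j g + (i : ZMod n)))‖
        ≤ tourLength s t σ := by
      rw [tourLength_eq]
      refine le_trans (Finset.sum_le_sum fun g _ => Finset.sum_le_sum fun i _ => ?_)
        (sum_sum_le_zmod _ hFnn m c (c - 1) hc (Nat.sub_le _ _) hsn ((j + 1 : ℕ) : ZMod n))
      rw [haddr, norm_sub_rev]
      exact norm_t_le s t _ _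
    linarith
  calc ∑ j ∈ Finset.range c, SOLcost s t σ c m j
      ≤ ∑ j ∈ Finset.range c,
          ((∑ g ∈ Finset.range m, ‖s (σ (groupStart n c j g + ((c - 1 : ℕ) : ZMod n)))
            - t (σ (groupStart n c j g + ((c - 1 : ℕ) : ZMod n)))‖) + 2 * tourLength s t σ) :=
        Finset.sum_le_sum fun j _ => key j
    _ = (∑ x : ZMod n, ‖s x - t x‖) + 2 * c * tourLength s t σ := by
        rw [Finset.sum_add_distrib, hcross_lemma s t σ c m hc hm, Finset.sum_const,
          Finset.card_range, nsmul_eq_mul]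
        ring
/-- Route of the LIFO plan. -/
def lifoRoute (d n c j : ℕ) (s t : ℕ → Pt d) (σ : Equiv.Perm (ZMod n)) (k : ℕ) : Pt d :=
  if k % (2*c) < c then
    s (σ ((((j+1 : ℕ) : ZMod n)) + ((k / (2*c) * c + k % (2*c) : ℕ) : ZMod n))).val
  else
    t (σ ((((j+1 : ℕ) : ZMod n)) + ((k / (2*c) * c + (2*c - 1 - k % (2*c)) : ℕ) : ZMod n))).val

/-- Linear index of request `i` in the LIFO plan with offset `j`. -/
def lifoU (n c j : ℕ) (σ : Equiv.Perm (ZMod n)) (i : Fin n) : ℕ :=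
  (σ.symm ((i.val : ℕ) : ZMod n) - ((j+1 : ℕ) : ZMod n)).val

lemma lifo_mod_div {c : ℕ} (hc : 0 < c) (g r : ℕ) (hr : r < 2*c) :
    (2*c*g + r) % (2*c) = r ∧ (2*c*g + r) / (2*c) = g := by
  constructor
  · rw [Nat.mul_add_mod, Nat.mod_eq_of_lt hr]
  · rw [Nat.mul_add_div (by omega), Nat.div_eq_of_lt hr, add_zero]

lemma lifo_cdivmod {c : ℕ} (hc : 0 < c) (g r : ℕ) (hr : r < c) :
    (g * c + r) % c = r ∧ (g * c + r) / c = g := by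
  constructor
  · rw [mul_comm, Nat.mul_add_mod, Nat.mod_eq_of_lt hr]
  · rw [mul_comm, Nat.mul_add_div hc, Nat.div_eq_of_lt hr, add_zero]

lemma plan_exists {d : ℕ} (n c m j : ℕ) (hn : 0 < n) (hc : 0 < c) (hm : m * c = n)
    (s t : ℕ → Pt d) (σ : Equiv.Perm (ZMod n)) :
    ∃ P : Plan d n c (fun i : Fin n => s i.val) (fun i : Fin n => t i.val),
      P.carriedCost ≤ SOLcost (fun i : ZMod n => s i.val) (fun i : ZMod n => t i.val) σ c m j := by
  haveI : NeZero n := ⟨hn.ne'⟩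
  set z : ZMod n := ((j+1 : ℕ) : ZMod n) with hz
  set U : Fin n → ℕ := lifoU n c j σ with hU
  set R : ℕ → Pt d := lifoRoute d n c j s t σ with hR
  set A : Fin n → ℕ := fun i => 2*c*(U i / c) + U i % c with hA
  set B : Fin n → ℕ := fun i => 2*c*(U i / c) + (2*c - 1 - U i % c) with hB
  have h2c : 0 < 2*c := by omega
  have hUlt : ∀ i, U i < n := fun i => ZMod.val_lt _
  have hUmod : ∀ i, U i % c < c := fun i => Nat.mod_lt _ hc
  have hUdiv : ∀ i, U i / c < m := by
    intro i
    rw [Nat.div_lt_iff_lt_mul hc, hm]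
    exact hUlt i
  have hσU : ∀ i : Fin n, σ (z + ((U i : ℕ) : ZMod n)) = ((i.val : ℕ) : ZMod n) := by
    intro i
    rw [hU, lifoU, ZMod.natCast_rightInverse, ← hz, add_comm, sub_add_cancel,
      Equiv.apply_symm_apply]
  have hUinj : Function.Injective U := by
    intro i i' h
    have h1 : ((i.val : ℕ) : ZMod n) = ((i'.val : ℕ) : ZMod n) := by
      rw [← hσU i, ← hσU i', h]
    exact Fin.ext (by rw [← ZMod.val_cast_of_lt i.isLt, ← ZMod.val_cast_of_lt i'.isLt, h1])
  -- route evaluation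
  have hRs : ∀ g r, r < c → R (2*c*g + r) = s (σ (z + ((g*c + r : ℕ) : ZMod n))).val := by
    intro g r hr
    obtain ⟨e1, e2⟩ := lifo_mod_div hc g r (by omega)
    rw [hR, lifoRoute, e1, e2, if_pos hr, ← hz]
  have hRt : ∀ g r, c ≤ r → r < 2*c → R (2*c*g + r)
      = t (σ (z + ((g*c + (2*c - 1 - r) : ℕ) : ZMod n))).val := by
    intro g r hcr hr
    obtain ⟨e1, e2⟩ := lifo_mod_div hc g r hr
    rw [hR, lifoRoute, e1, e2, if_neg (by omega), ← hz]
  -- pickup / delivery endpoints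
  have hstart : ∀ i : Fin n, R (A i) = s i.val := by
    intro i
    rw [hA]
    simp only
    rw [hRs (U i / c) (U i % c) (hUmod i), Nat.div_add_mod', hσU, ZMod.val_cast_of_lt i.isLt]
  have hend : ∀ i : Fin n, R (B i) = t i.val := by
    intro i
    rw [hB]
    simp only
    rw [hRt (U i / c) (2*c - 1 - U i % c) (by have := hUmod i; omega) (by omega)]
    have e3 : 2*c - 1 - (2*c - 1 - U i % c) = U i % c := by have := hUmod i; omega
    rw [e3, Nat.div_add_mod', hσU, ZMod.val_cast_of_lt i.isLt]
  -- the group of step k is determined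
  have hgrp : ∀ (k : ℕ) (i : Fin n), A i ≤ k → k < B i → k / (2*c) = U i / c := by
    intro k i h1 h2
    rw [hA] at h1; rw [hB] at h2
    simp only at h1 h2
    have e : k = 2*c*(U i / c) + (k - 2*c*(U i / c)) := by omega
    have hlt : k - 2*c*(U i / c) < 2*c := by omega
    conv_lhs => rw [e]
    exact (lifo_mod_div hc _ _ hlt).2
  -- capacity
  have hcap : ∀ k : ℕ, (Finset.univ.filter fun i : Fin n => A i ≤ k ∧ k < B i).card ≤ c := by
    intro k
    have hsub : ∀ i ∈ Finset.univ.filter (fun i : Fin n => A i ≤ k ∧ k < B i),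
        U i ∈ Finset.Ico (k / (2*c) * c) (k / (2*c) * c + c) := by
      intro i hi
      rw [Finset.mem_filter] at hi
      obtain ⟨-, h1, h2⟩ := hi
      have hg := hgrp k i h1 h2
      rw [Finset.mem_Ico, hg]
      have hdm := Nat.div_add_mod' (U i) c
      have := hUmod i
      omega
    calc (Finset.univ.filter fun i : Fin n => A i ≤ k ∧ k < B i).card
        ≤ (Finset.Ico (k / (2*c) * c) (k / (2*c) * c + c)).card :=
          Finset.card_le_card_of_injOn U hsub (fun i _ i' _ h => hUinj h)
      _ = c := by rw [Nat.card_Ico]; omega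
  have hab : ∀ i : Fin n, A i < B i := by
    intro i
    have := hUmod i
    rw [hA, hB]; simp only; omega
  have hbM : ∀ i : Fin n, B i ≤ m * (2*c) := by
    intro i
    have h1 : 2*c*(U i / c + 1) ≤ 2*c*m := Nat.mul_le_mul_left _ (hUdiv i)
    rw [Nat.mul_add, mul_one] at h1
    rw [hB]; simp only
    rw [show m * (2*c) = 2*c*m from mul_comm _ _]
    omega
  refine ⟨⟨m * (2*c), R, A, B, hab, hbM, hstart, hend, hcap⟩, ?_⟩
  have haddr3 : ∀ g w : ℕ, z + ((g*c + w : ℕ) : ZMod n)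
      = groupStart n c j g + (w : ZMod n) := by
    intro g w; rw [groupStart, hz]; push_cast; ring
  -- load positivity on working steps
  have hload1 : ∀ g r : ℕ, g < m → r < 2*c - 1 →
      1 ≤ (Finset.univ.filter fun i : Fin n => A i ≤ 2*c*g + r ∧ 2*c*g + r < B i).card := by
    intro g r hgm hr
    set idx := min r (2*c - 2 - r) with hidx
    have hidxc : idx < c := by omega
    have hgcn : g*c + c ≤ n := by
      have h1 : (g+1) * c ≤ m * c := Nat.mul_le_mul_right c hgm
      rw [add_one_mul] at h1
      omega
    set x := σ (z + ((g*c + idx : ℕ) : ZMod n)) with hx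
    set i0 : Fin n := ⟨x.val, ZMod.val_lt x⟩ with hi0
    have hUi0 : U i0 = g*c + idx := by
      rw [hU, lifoU]
      simp only [hi0]
      rw [ZMod.natCast_rightInverse x, hx, Equiv.symm_apply_apply, ← hz,
        add_sub_cancel_left, ZMod.val_cast_of_lt (by omega)]
    refine Finset.card_pos.mpr ⟨i0, Finset.mem_filter.mpr ⟨Finset.mem_univ _, ?_, ?_⟩⟩
    · rw [hA]; simp only [hUi0, (lifo_cdivmod hc g idx hidxc).1, (lifo_cdivmod hc g idx hidxc).2]
      omega
    · rw [hB]; simp only [hUi0, (lifo_cdivmod hc g idx hidxc).1, (lifo_cdivmod hc g idx hidxc).2]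
      omega
  -- load zero at the last step of each group
  have hload0 : ∀ g : ℕ,
      (Finset.univ.filter fun i : Fin n => A i ≤ 2*c*g + (2*c-1) ∧ 2*c*g + (2*c-1) < B i).card
        = 0 := by
    intro g
    rw [Finset.card_eq_zero, Finset.filter_eq_empty_iff]
    rintro i -
    intro ⟨h1, h2⟩
    have hg := hgrp _ i h1 h2
    have e2 : (2*c*g + (2*c-1)) / (2*c) = g := (lifo_mod_div hc g (2*c-1) (by omega)).2
    rw [e2] at hg
    rw [hA] at h1; rw [hB] at h2
    simp only at h1 h2
    rw [← hg] at h1 h2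
    omega
  -- generic splitting of a sum over a group
  have split : ∀ f : ℕ → ℝ, ∑ r ∈ Finset.range (2*c), f r
      = ((∑ r ∈ Finset.range (c-1), f r) + f (c-1)
        + ∑ i ∈ Finset.range (c-1), f (c + i)) + f (2*c-1) := by
    intro f
    calc ∑ r ∈ Finset.range (2*c), f r
        = ∑ r ∈ Finset.range ((c + (c-1)) + 1), f r := by
          rw [show (2*c) = (c + (c-1)) + 1 by omega]
      _ = ∑ r ∈ Finset.range (c + (c-1)), f r + f (c + (c-1)) := Finset.sum_range_succ f _
      _ = ((∑ r ∈ Finset.range c, f r) + ∑ i ∈ Finset.range (c-1), f (c + i)) + f (2*c-1) := by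
          rw [Finset.sum_range_add, show c + (c-1) = 2*c-1 by omega]
      _ = ((∑ r ∈ Finset.range (c-1), f r) + f (c-1)
            + ∑ i ∈ Finset.range (c-1), f (c + i)) + f (2*c-1) := by
          have e : ∑ r ∈ Finset.range c, f r
              = ∑ r ∈ Finset.range (c-1), f r + f (c-1) := by
            conv_lhs => rw [show c = (c-1) + 1 by omega]
            exact Finset.sum_range_succ f _
          rw [e]
  show (∑ k ∈ Finset.range (m * (2*c)),
      if 1 ≤ (Finset.univ.filter fun i : Fin n => A i ≤ k ∧ k < B i).card
      then ‖R (k+1) - R k‖ else 0) ≤ _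
  rw [sum_divmod _ m (2*c), SOLcost]
  apply Finset.sum_le_sum
  intro g hg
  rw [Finset.mem_range] at hg
  rw [split]
  have hmid : (if 1 ≤ (Finset.univ.filter fun i : Fin n =>
        A i ≤ 2*c*g + (c-1) ∧ 2*c*g + (c-1) < B i).card
      then ‖R (2*c*g + (c-1) + 1) - R (2*c*g + (c-1))‖ else 0)
      = ‖s (σ (groupStart n c j g + ((c-1 : ℕ) : ZMod n))).val
          - t (σ (groupStart n c j g + ((c-1 : ℕ) : ZMod n))).val‖ := by
    rw [if_pos (hload1 g (c-1) hg (by omega))]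
    have e1 : R (2*c*g + (c-1)) = s (σ (z + ((g*c + (c-1) : ℕ) : ZMod n))).val :=
      hRs g (c-1) (by omega)
    have e2 : R (2*c*g + (c-1) + 1) = t (σ (z + ((g*c + (c-1) : ℕ) : ZMod n))).val := by
      have : 2*c*g + (c-1) + 1 = 2*c*g + c := by omega
      rw [this, hRt g c le_rfl (by omega), show 2*c - 1 - c = c - 1 by omega]
    rw [e1, e2, haddr3, norm_sub_rev]
  have hzero : (if 1 ≤ (Finset.univ.filter fun i : Fin n =>
        A i ≤ 2*c*g + (2*c-1) ∧ 2*c*g + (2*c-1) < B i).card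
      then ‖R (2*c*g + (2*c-1) + 1) - R (2*c*g + (2*c-1))‖ else 0) = 0 := by
    rw [if_neg]
    rw [hload0 g]
    omega
  have hsedge : ∀ r : ℕ, r < c - 1 →
      (if 1 ≤ (Finset.univ.filter fun i : Fin n =>
          A i ≤ 2*c*g + r ∧ 2*c*g + r < B i).card
        then ‖R (2*c*g + r + 1) - R (2*c*g + r)‖ else 0)
      = ‖s (σ (groupStart n c j g + (r : ZMod n))).val
          - s (σ (groupStart n c j g + (r : ZMod n) + 1)).val‖ := by
    intro r hr
    rw [if_pos (hload1 g r hg (by omega))]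
    have e1 : R (2*c*g + r) = s (σ (z + ((g*c + r : ℕ) : ZMod n))).val := hRs g r (by omega)
    have e2 : R (2*c*g + r + 1) = s (σ (z + ((g*c + (r+1) : ℕ) : ZMod n))).val := by
      have : 2*c*g + r + 1 = 2*c*g + (r+1) := by omega
      rw [this, hRs g (r+1) (by omega)]
    have e3 : z + ((g*c + (r+1) : ℕ) : ZMod n) = groupStart n c j g + (r : ZMod n) + 1 := by
      rw [haddr3]; push_cast; ring
    rw [e1, e2, e3, haddr3, norm_sub_rev]
  have htedge : ∀ i : ℕ, i < c - 1 →
      (if 1 ≤ (Finset.univ.filter fun i' : Fin n =>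
          A i' ≤ 2*c*g + (c + i) ∧ 2*c*g + (c + i) < B i').card
        then ‖R (2*c*g + (c + i) + 1) - R (2*c*g + (c + i))‖ else 0)
      = ‖t (σ (groupStart n c j g + ((c-2-i : ℕ) : ZMod n) + 1)).val
          - t (σ (groupStart n c j g + ((c-2-i : ℕ) : ZMod n))).val‖ := by
    intro i hi
    rw [if_pos (hload1 g (c+i) hg (by omega))]
    have e1 : R (2*c*g + (c + i)) = t (σ (z + ((g*c + (c-1-i) : ℕ) : ZMod n))).val := by
      rw [hRt g (c+i) (by omega) (by omega), show 2*c - 1 - (c + i) = c - 1 - i by omega]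
    have e2 : R (2*c*g + (c + i) + 1) = t (σ (z + ((g*c + (c-2-i) : ℕ) : ZMod n))).val := by
      have : 2*c*g + (c + i) + 1 = 2*c*g + (c + (i+1)) := by omega
      rw [this, hRt g (c+(i+1)) (by omega) (by omega),
        show 2*c - 1 - (c + (i+1)) = c - 2 - i by omega]
    have e3 : z + ((g*c + (c-1-i) : ℕ) : ZMod n)
        = groupStart n c j g + ((c-2-i : ℕ) : ZMod n) + 1 := by
      rw [show g*c + (c-1-i) = g*c + ((c-2-i) + 1) by omega, haddr3]
      push_cast; ring
    rw [e1, e2, e3, haddr3, norm_sub_rev]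
  have es : ∑ r ∈ Finset.range (c-1),
      (if 1 ≤ (Finset.univ.filter fun i : Fin n =>
          A i ≤ 2*c*g + r ∧ 2*c*g + r < B i).card
        then ‖R (2*c*g + r + 1) - R (2*c*g + r)‖ else 0)
      = ∑ r ∈ Finset.range (c-1),
        ‖s (σ (groupStart n c j g + (r : ZMod n))).val
          - s (σ (groupStart n c j g + (r : ZMod n) + 1)).val‖ :=
    Finset.sum_congr rfl fun r hr => hsedge r (Finset.mem_range.mp hr)
  have et : ∑ i ∈ Finset.range (c-1),
      (if 1 ≤ (Finset.univ.filter fun i' : Fin n =>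
          A i' ≤ 2*c*g + (c + i) ∧ 2*c*g + (c + i) < B i').card
        then ‖R (2*c*g + (c + i) + 1) - R (2*c*g + (c + i))‖ else 0)
      = ∑ i ∈ Finset.range (c-1),
        ‖t (σ (groupStart n c j g + (i : ZMod n) + 1)).val
          - t (σ (groupStart n c j g + (i : ZMod n))).val‖ := by
    rw [← Finset.sum_range_reflect (fun i => ‖t (σ (groupStart n c j g + (i : ZMod n) + 1)).val
      - t (σ (groupStart n c j g + (i : ZMod n))).val‖) (c-1)]
    refine Finset.sum_congr rfl fun i hi => ?_
    rw [Finset.mem_range] at hi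
    rw [htedge i hi, show c-1-1-i = c-2-i by omega]
  refine le_of_eq ?_
  rw [lifoCost, es, et, hmid, hzero]
  ring
/-- Theorem 1, deterministic core: requests `(s_i, t_i)` in `ℝ^d × ℝ^d` with
`(1/n)·Σ_{i<n} ‖s_i − t_i‖ → μ > 0`; capacities `c_n ∣ n` with `c_n / n^{1/(2d)} → 0`;
permutations `σ_n` with tour length `‖T_n‖ ≤ K·n^{(2d−1)/(2d)}`. Then, with
`SOL_n = min_{0 ≤ j < c_n} SOL_j^{(n)}` and `OPT_n` the infimum of carried costs over all
capacity-`c_n` plans for the first `n` requests, `SOL_n / OPT_n → 1`. -/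
theorem stmt_8 (d : ℕ) (hd : 1 ≤ d) (s t : ℕ → Pt d) (μ : ℝ) (hμpos : 0 < μ)
    (hmean : Tendsto (fun n : ℕ => (∑ i ∈ Finset.range n, ‖s i - t i‖) / n) atTop (nhds μ))
    (c : ℕ → ℕ) (hc : ∀ n, 0 < c n) (hdvd : ∀ n, c n ∣ n)
    (hclim : Tendsto (fun n : ℕ => (c n : ℝ) / (n : ℝ) ^ ((1 : ℝ) / (2 * d))) atTop (nhds 0))
    (σ : (n : ℕ) → Equiv.Perm (ZMod n)) (K : ℝ)
    (hT : ∀ n : ℕ, tourLength (fun i : ZMod n => s i.val) (fun i : ZMod n => t i.val) (σ n)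
      ≤ K * (n : ℝ) ^ (((2 * d : ℝ) - 1) / (2 * d))) :
    Tendsto (fun n : ℕ =>
        ((Finset.range (c n)).inf' (Finset.nonempty_range_iff.mpr (hc n).ne')
            (fun j => SOLcost (fun i : ZMod n => s i.val) (fun i : ZMod n => t i.val)
              (σ n) (c n) (n / c n) j))
          / sInf {x : ℝ | ∃ P : Plan d n (c n)
              (fun i : Fin n => s i.val) (fun i : Fin n => t i.val), P.carriedCost = x})
      atTop (nhds 1) := by
  classical
  have hd' : (0 : ℝ) < (d : ℝ) := by exact_mod_cast hd
  set q : ℝ := (1 : ℝ) / (2 * d) with hq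
  set p : ℝ := ((2 * d : ℝ) - 1) / (2 * d) with hp
  set L : ℕ → ℝ := fun n => ∑ i ∈ Finset.range n, ‖s i - t i‖ with hLdef
  have hpq : p = 1 - q := by
    rw [hp, hq]
    field_simp
  -- eventual positivity of L
  have hμ2 : ∀ᶠ n : ℕ in atTop, μ / 2 < L n / n :=
    hmean.eventually (eventually_gt_nhds (by linarith))
  -- the two eventual bounds
  have hboth : ∀ᶠ n : ℕ in atTop,
      (1 : ℝ) ≤ ((Finset.range (c n)).inf' (Finset.nonempty_range_iff.mpr (hc n).ne')
            (fun j => SOLcost (fun i : ZMod n => s i.val) (fun i : ZMod n => t i.val)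
              (σ n) (c n) (n / c n) j))
          / sInf {x : ℝ | ∃ P : Plan d n (c n)
              (fun i : Fin n => s i.val) (fun i : Fin n => t i.val), P.carriedCost = x}
      ∧ ((Finset.range (c n)).inf' (Finset.nonempty_range_iff.mpr (hc n).ne')
            (fun j => SOLcost (fun i : ZMod n => s i.val) (fun i : ZMod n => t i.val)
              (σ n) (c n) (n / c n) j))
          / sInf {x : ℝ | ∃ P : Plan d n (c n)
              (fun i : Fin n => s i.val) (fun i : Fin n => t i.val), P.carriedCost = x}
        ≤ 1 + 2 * K * (((c n : ℝ) / (n : ℝ) ^ q) * ((n : ℝ) / L n)) := by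
    filter_upwards [hμ2, eventually_ge_atTop 1] with n hLn hn1
    have hn0 : 0 < n := hn1
    haveI : NeZero n := ⟨hn0.ne'⟩
    have hnR : (0 : ℝ) < (n : ℝ) := by exact_mod_cast hn0
    have hcR : (0 : ℝ) < (c n : ℝ) := by exact_mod_cast hc n
    have hLpos : 0 < L n := by
      have h1 : 0 < L n / n := lt_trans (half_pos hμpos) hLn
      calc (0 : ℝ) < (L n / n) * n := mul_pos h1 hnR
        _ = L n := div_mul_cancel₀ _ hnR.ne'
    have hmc : (n / c n) * c n = n := Nat.div_mul_cancel (hdvd n)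
    set SOLn : ℝ := (Finset.range (c n)).inf' (Finset.nonempty_range_iff.mpr (hc n).ne')
      (fun j => SOLcost (fun i : ZMod n => s i.val) (fun i : ZMod n => t i.val)
        (σ n) (c n) (n / c n) j) with hSOLn
    set S : Set ℝ := {x : ℝ | ∃ P : Plan d n (c n)
        (fun i : Fin n => s i.val) (fun i : Fin n => t i.val), P.carriedCost = x} with hS
    -- lower bound for every plan
    have hlb : ∀ x ∈ S, L n / c n ≤ x := by
      rintro x ⟨P, rfl⟩
      refine le_trans (le_of_eq ?_) (plan_lb (hc n) P)
      rw [Fin.sum_univ_eq_sum_range (fun k => ‖s k - t k‖) n]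
    obtain ⟨P0, hP0⟩ := plan_exists n (c n) (n / c n) 0 hn0 (hc n) hmc s t (σ n)
    have hSne : S.Nonempty := ⟨P0.carriedCost, P0, rfl⟩
    have hbdd : BddBelow S := ⟨L n / c n, hlb⟩
    have hOPTlb : L n / c n ≤ sInf S := le_csInf hSne hlb
    have hOPTpos : 0 < sInf S := lt_of_lt_of_le (div_pos hLpos hcR) hOPTlb
    have hOPTleSOL : sInf S ≤ SOLn := by
      rw [hSOLn]
      refine Finset.le_inf' _ _ fun j _ => ?_
      obtain ⟨P, hP⟩ := plan_exists n (c n) (n / c n) j hn0 (hc n) hmc s t (σ n)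
      exact (csInf_le hbdd ⟨P, rfl⟩).trans hP
    have hSOLub : SOLn ≤ L n / c n + 2 * K * (n : ℝ) ^ p := by
      have havg := sol_avg (fun i : ZMod n => s i.val) (fun i : ZMod n => t i.val) (σ n)
        (c n) (n / c n) (hc n) hmc
      have hLx : (∑ x : ZMod n, ‖s x.val - t x.val‖) = L n := by
        rw [← sum_zmod' (fun x : ZMod n => ‖s x.val - t x.val‖)]
        exact Finset.sum_congr rfl fun i hi => by
          rw [ZMod.val_cast_of_lt (Finset.mem_range.mp hi)]
      have hsum : (c n : ℝ) * SOLn ≤ ∑ j ∈ Finset.range (c n),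
          SOLcost (fun i : ZMod n => s i.val) (fun i : ZMod n => t i.val)
            (σ n) (c n) (n / c n) j := by
        calc (c n : ℝ) * SOLn = ∑ _j ∈ Finset.range (c n), SOLn := by
              rw [Finset.sum_const, Finset.card_range, nsmul_eq_mul]
          _ ≤ _ := Finset.sum_le_sum fun j hj => Finset.inf'_le _ hj
      have hTK := hT n
      have h2cT : 2 * (c n : ℝ) * tourLength (fun i : ZMod n => s i.val)
            (fun i : ZMod n => t i.val) (σ n)
          ≤ 2 * (c n : ℝ) * (K * (n : ℝ) ^ p) := by
        apply mul_le_mul_of_nonneg_left hTK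
        positivity
      have hkey : (c n : ℝ) * SOLn ≤ L n + 2 * (c n : ℝ) * (K * (n : ℝ) ^ p) := by
        rw [hLx] at havg
        linarith
      have hexp : (c n : ℝ) * (L n / c n + 2 * K * (n : ℝ) ^ p)
          = L n + 2 * (c n : ℝ) * (K * (n : ℝ) ^ p) := by
        field_simp
      nlinarith [hkey, hexp, hcR]
    refine ⟨(one_le_div hOPTpos).mpr hOPTleSOL, ?_⟩
    have hSOLnn : (0 : ℝ) ≤ L n / c n + 2 * K * (n : ℝ) ^ p :=
      le_trans (le_trans hOPTpos.le (hOPTleSOL)) hSOLub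
    have hstep : SOLn / sInf S ≤ (L n / c n + 2 * K * (n : ℝ) ^ p) / (L n / c n) :=
      div_le_div₀ hSOLnn hSOLub (div_pos hLpos hcR) hOPTlb
    refine hstep.trans (le_of_eq ?_)
    have hnq : (0 : ℝ) < (n : ℝ) ^ q := Real.rpow_pos_of_pos hnR q
    have hnp : (n : ℝ) ^ p = (n : ℝ) / (n : ℝ) ^ q := by
      rw [hpq, Real.rpow_sub hnR, Real.rpow_one]
    rw [hnp]
    field_simp
  -- the upper bound tends to 1
  have hE : Tendsto (fun n : ℕ =>
      1 + 2 * K * (((c n : ℝ) / (n : ℝ) ^ q) * ((n : ℝ) / L n))) atTop (nhds 1) := by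
    have h1 : Tendsto (fun n : ℕ => (n : ℝ) / L n) atTop (nhds μ⁻¹) := by
      have h2 : Tendsto (fun n : ℕ => (L n / (n : ℝ))⁻¹) atTop (nhds μ⁻¹) :=
        hmean.inv₀ hμpos.ne'
      exact h2.congr fun n => inv_div _ _
    have h3 : Tendsto (fun n : ℕ => ((c n : ℝ) / (n : ℝ) ^ q) * ((n : ℝ) / L n))
        atTop (nhds (0 * μ⁻¹)) := hclim.mul h1
    rw [zero_mul] at h3
    have h4 := (h3.const_mul (2 * K)).const_add 1
    simpa using h4
  exact tendsto_of_tendsto_of_tendsto_of_le_of_le' tendsto_const_nhds hE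
    (hboth.mono fun n h => h.1) (hboth.mono fun n h => h.2)
end
end
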